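/- The intersection of a simplex T ⊆ ℝⁿ with any translate of a positive scalar multiple of T is either empty or itself a translate of a (possibly smaller) positive scalar multiple of T. -/

import Mathlib

/-!
In barycentric coordinates `λᵢ` with respect to the vertices, `T = {z | ∀ i, 0 ≤ λᵢ z}`, and for
`s ≥ 0` the homothet `s • T + {y}` is `{z | ∀ i, aᵢ ≤ λᵢ z}` with `aᵢ = λᵢ y - s λᵢ 0`, so
`∑ aᵢ = 1 - s`; conversely every such set with `∑ aᵢ ≤ 1` is a homothet with ratio `1 - ∑ aᵢ`.
Intersecting two such sets takes the pointwise maximum of the bounds. For `(r • T + {c}) ∩ T` the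
bounds are `aᵢ ⊔ 0` with `∑ aᵢ = 1 - r`; nonemptiness gives `∑ (aᵢ ⊔ 0) ≤ 1`, i.e. ratio `≥ 0`,
and `∑ (aᵢ ⊔ 0) ≥ ∑ aᵢ` gives ratio `≤ r`.
-/

open Set
open scoped Pointwise

namespace AffineBasis

variable {ι k E : Type*} [AddCommGroup E]

section CommRing

variable [CommRing k] [Module k E] (b : AffineBasis ι k E)

lemma coord_smul_add (i : ι) (s : k) (z v : E) :
    b.coord i (s • z + v) = s * (b.coord i z - b.coord i 0) + b.coord i v := by
  have h (x : E) : b.coord i x = (b.coord i).linear x + b.coord i 0 := by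
    simpa using congrFun (b.coord i).decomp x
  rw [h (s • z + v), h z, h v, map_add, map_smul, smul_eq_mul]
  ring

variable [Fintype ι]

lemma exists_coord_eq {w : ι → k} (hw : ∑ i, w i = 1) : ∃ y : E, ∀ i, b.coord i y = w i :=
  ⟨Finset.univ.affineCombination k b w, fun i =>
    b.coord_apply_combination_of_mem (Finset.mem_univ i) hw⟩

lemma sum_coord_sub_mul_coord_zero (s : k) (v : E) :
    ∑ i, (b.coord i v - s * b.coord i 0) = 1 - s := by
  simp [Finset.sum_sub_distrib, ← Finset.mul_sum, b.sum_coord_apply_eq_one]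

end CommRing

section LinearOrderedField

variable [Field k] [LinearOrder k] [Module k E] (b : AffineBasis ι k E)

def coordSimplex (a : ι → k) : Set E := {z | ∀ i, a i ≤ b.coord i z}

lemma coordSimplex_inter (a a' : ι → k) :
    b.coordSimplex a ∩ b.coordSimplex a' = b.coordSimplex (a ⊔ a') := by
  ext z
  simp only [coordSimplex, mem_inter_iff, mem_ofPred_eq, Pi.sup_apply, sup_le_iff, forall_and]

variable [IsStrictOrderedRing k]

lemma convexHull_range_eq_coordSimplex_zero : convexHull k (range b) = b.coordSimplex 0 :=
  b.convexHull_eq_nonneg_coord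

lemma coordSimplex_zero_nonempty : (b.coordSimplex 0 : Set E).Nonempty := by
  obtain ⟨i⟩ := b.nonempty
  rw [← convexHull_range_eq_coordSimplex_zero]
  exact ⟨b i, subset_convexHull k _ (mem_range_self i)⟩

variable [Fintype ι]

lemma sum_le_one_of_coordSimplex_nonempty {a : ι → k} (h : (b.coordSimplex a).Nonempty) :
    ∑ i, a i ≤ 1 := by
  obtain ⟨z, hz⟩ := h
  calc ∑ i, a i ≤ ∑ i, b.coord i z := Finset.sum_le_sum fun i _ => hz i
    _ = 1 := b.sum_coord_apply_eq_one z

lemma coordSimplex_coord_eq_singleton (v : E) :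
    b.coordSimplex (fun i => b.coord i v) = {v} := by
  ext z
  refine ⟨fun hz => ?_, by rintro rfl i; rfl⟩
  have hsum : ∑ i, b.coord i v = ∑ i, b.coord i z := by
    rw [b.sum_coord_apply_eq_one, b.sum_coord_apply_eq_one]
  have heq := (Finset.sum_eq_sum_iff_of_le fun i _ => hz i).1 hsum
  exact b.ext_elem fun i => (heq i (Finset.mem_univ i)).symm

lemma smul_coordSimplex_zero_add_singleton {s : k} (hs : 0 ≤ s) (v : E) :
    s • b.coordSimplex 0 + {v} = b.coordSimplex fun i => b.coord i v - s * b.coord i 0 := by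
  rcases hs.eq_or_lt with rfl | hs
  · simp [zero_smul_set b.coordSimplex_zero_nonempty, coordSimplex_coord_eq_singleton]
  ext z
  rw [add_singleton, ← image_smul, image_image]
  constructor
  · rintro ⟨t, ht, rfl⟩ i
    have := ht i
    rw [Pi.zero_apply] at this
    rw [coord_smul_add]
    nlinarith
  · intro hz
    have hzt : s • (s⁻¹ • (z - v)) + v = z := by simp [smul_smul, hs.ne']
    refine ⟨s⁻¹ • (z - v), fun i => ?_, hzt⟩
    have h := b.coord_smul_add i s (s⁻¹ • (z - v)) v
    rw [hzt] at h
    have := hz i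
    rw [Pi.zero_apply]
    nlinarith

lemma exists_coordSimplex_eq_smul_add_singleton {a : ι → k} (ha : ∑ i, a i ≤ 1) :
    ∃ y : E, b.coordSimplex a = (1 - ∑ i, a i) • b.coordSimplex 0 + {y} := by
  set s := 1 - ∑ i, a i
  obtain ⟨y, hy⟩ := b.exists_coord_eq (w := fun i => a i + s * b.coord i 0) (by
    simp [Finset.sum_add_distrib, ← Finset.mul_sum, b.sum_coord_apply_eq_one, s])
  refine ⟨y, ?_⟩
  rw [b.smul_coordSimplex_zero_add_singleton (by linarith) y]
  congr 1
  funext i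
  rw [hy]
  ring

end LinearOrderedField

end AffineBasis

/-- The intersection of a simplex `T` with a translate `rT + x` of a positive scalar
multiple of `T` (with `r ∈ (0,1]`), if nonempty, equals `sT + y` for some
`s ∈ [0, r]` and `y` (the case `s = 0` being a degenerate point). -/
theorem stmt2 {n : ℕ} (x₀ : Fin (n + 1) → EuclideanSpace ℝ (Fin n))
    (hx₀ : AffineIndependent ℝ x₀)
    (T : Set (EuclideanSpace ℝ (Fin n))) (hT : T = convexHull ℝ (Set.range x₀))
    (r : ℝ) (hr : r ∈ Set.Ioc (0:ℝ) 1) (c : EuclideanSpace ℝ (Fin n))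
    (hne : ((r • T + {c}) ∩ T).Nonempty) :
    ∃ s : ℝ, ∃ y : EuclideanSpace ℝ (Fin n), 0 ≤ s ∧ s ≤ r ∧
      (r • T + {c}) ∩ T = s • T + {y} := by
  let b : AffineBasis (Fin (n + 1)) ℝ (EuclideanSpace ℝ (Fin n)) :=
    ⟨x₀, hx₀, by simp [hx₀.affineSpan_eq_top_iff_card_eq_finrank_add_one]⟩
  have hTb : T = b.coordSimplex 0 := hT.trans b.convexHull_range_eq_coordSimplex_zero
  set a := fun i => b.coord i c - r * b.coord i 0
  have hinter : (r • T + {c}) ∩ T = b.coordSimplex (a ⊔ 0) := by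
    rw [hTb, b.smul_coordSimplex_zero_add_singleton hr.1.le, b.coordSimplex_inter]
  rw [hinter] at hne ⊢
  have hsum_le_one := b.sum_le_one_of_coordSimplex_nonempty hne
  have hsum_ge : 1 - r ≤ ∑ i, (a ⊔ 0) i := by
    rw [← b.sum_coord_sub_mul_coord_zero r c]
    exact Finset.sum_le_sum fun i _ => le_sup_left
  obtain ⟨y, hy⟩ := b.exists_coordSimplex_eq_smul_add_singleton hsum_le_one
  exact ⟨1 - ∑ i, (a ⊔ 0) i, y, by linarith, by linarith, hTb ▸ hy⟩
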